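/- arXiv:2003.05939 — 2 statements merged into one kernel-verified Lean document; each statement's English description precedes it below -/
import Mathlib

section
/- Let k ≤ 11 be a positive integer. There exists a positive integer N(k) such that for every positive integer n all of whose prime factors exceed N(k), every subset A of ℤ/nℤ \ {0} of size k with ∑_{z∈A} z ≠ 0 admits an ordering of its elements whose partial sums are nonzero and pairwise distinct. -/
/-!
Scale `A` by a unit. Pigeonholing the vectors `((t * a).val * (2k+1) / n)_{a ∈ A}` over
`t ≤ (2k+1)^k` gives `0 < c ≤ (2k+1)^k`, hence `c` coprime to `n`, such that every `c * a` is
congruent to an integer of absolute value below `n / (2k+1)`. Every subset sum of this integer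
lift has absolute value below `n / 2`, so an Alspach ordering of the lift over `ℤ` reduces to one
modulo `n`, and multiplying back by `c⁻¹` preserves it.

Over `ℤ`, with `P` the positive elements and `M` the negated negative ones, order both so that
their chains of partial sums meet only at `0`; then walk up to `∑ P` through `P` backwards and
down through the negative elements: the partial sums are `∑ P` minus the two chains.
-/

/-- An ordering of the finite set `A` (as a list) whose partial sums are all nonzero
and pairwise distinct. -/
def IsAlspachOrdering {G : Type*} [AddCommGroup G] (A : Finset G) (l : List G) : Prop :=
  l.Nodup ∧ (∀ x, x ∈ l ↔ x ∈ A) ∧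
    (∀ i : ℕ, 1 ≤ i → i ≤ l.length → (l.take i).sum ≠ 0) ∧
    (∀ i j : ℕ, 1 ≤ i → i < j → j ≤ l.length → (l.take i).sum ≠ (l.take j).sum)

def partialSums {M : Type*} [AddMonoid M] (l : List M) : List M := l.inits.map List.sum

section PartialSums

variable {M G : Type*}

@[simp]
theorem partialSums_nil [AddMonoid M] : partialSums ([] : List M) = [0] := rfl

@[simp]
theorem partialSums_cons [AddMonoid M] (a : M) (l : List M) :
    partialSums (a :: l) = 0 :: (partialSums l).map (a + ·) := by
  simp [partialSums, Function.comp_def]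

theorem partialSums_append [AddMonoid M] (s t : List M) :
    partialSums (s ++ t) = partialSums s ++ (partialSums t).tail.map (s.sum + ·) := by
  simp [partialSums, List.map_tail, Function.comp_def]

theorem partialSums_map [AddMonoid M] [AddMonoid G] (φ : M →+ G) (l : List M) :
    partialSums (l.map φ) = (partialSums l).map φ := by
  simp [partialSums, List.map_inits, Function.comp_def, map_list_sum]

theorem partialSums_reverse [AddCommGroup G] (l : List G) :
    partialSums l.reverse = (partialSums l).reverse.map (l.sum - ·) := by
  induction l with
  | nil => simp [partialSums]
  | cons a l ih =>
    rw [List.reverse_cons, partialSums_append, ih]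
    simp [Function.comp_def, add_comm a]

theorem mem_partialSums [AddMonoid M] {l : List M} {s : M} :
    s ∈ partialSums l ↔ ∃ t, t <+: l ∧ t.sum = s := by
  simp [partialSums]

theorem partialSums_eq_zero_cons_tail [AddMonoid M] (l : List M) :
    partialSums l = 0 :: (partialSums l).tail := by
  cases l <;> simp

theorem exists_sum_eq_of_mem_partialSums [AddCommMonoid M] [DecidableEq M]
    {l : List M} (hl : l.Nodup) {s : M} (hs : s ∈ partialSums l) :
    ∃ T ⊆ l.toFinset, s = ∑ x ∈ T, x := by
  obtain ⟨t, ht, rfl⟩ := mem_partialSums.1 hs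
  refine ⟨t.toFinset, fun x hx => List.mem_toFinset.2 (ht.subset (List.mem_toFinset.1 hx)), ?_⟩
  rw [List.sum_toFinset _ (hl.sublist ht.sublist), List.map_id']

theorem nodup_partialSums_iff [AddMonoid M] {l : List M} : (partialSums l).Nodup ↔
    ∀ i j, i < j → j ≤ l.length → (l.take i).sum ≠ (l.take j).sum := by
  simp only [List.Nodup, List.pairwise_iff_getElem, partialSums, List.length_map,
    List.length_inits, List.getElem_map, List.getElem_inits]
  exact ⟨fun h i j hij hj => h i j (by omega) (by omega) hij,
    fun h i j _ hj hij => h i j hij (by omega)⟩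

-- The leading empty sum `0` of `partialSums l` makes its distinctness cover nonvanishing too.
theorem isAlspachOrdering_iff [AddCommGroup G] {A : Finset G} {l : List G} :
    IsAlspachOrdering A l ↔
      l.Nodup ∧ (∀ x, x ∈ l ↔ x ∈ A) ∧ (partialSums l).Nodup := by
  rw [nodup_partialSums_iff, IsAlspachOrdering]
  refine and_congr_right fun _ => and_congr_right fun _ => ⟨?_, ?_⟩
  · rintro ⟨hne, hdist⟩ i j hij hj
    rcases Nat.eq_zero_or_pos i with rfl | hi
    · simpa [eq_comm] using hne j (by omega) hj
    · exact hdist i j hi hij hj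
  · intro h
    exact ⟨fun i hi hil => by simpa [eq_comm] using h 0 i hi hil,
      fun i j _ hij hj => h i j hij hj⟩

theorem IsAlspachOrdering.map [AddCommGroup G] [AddCommGroup M] [DecidableEq M] {A : Finset G}
    {l : List G} (hl : IsAlspachOrdering A l) (φ : G →+ M) (hA : Set.InjOn φ A)
    (hsums : Set.InjOn φ {s | s ∈ partialSums l}) :
    IsAlspachOrdering (A.image φ) (l.map φ) := by
  rw [isAlspachOrdering_iff] at hl ⊢
  obtain ⟨hnodup, hmem, hsums_nodup⟩ := hl
  refine ⟨hnodup.map_on fun x hx y hy => hA ((hmem x).1 hx) ((hmem y).1 hy), ?_, ?_⟩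
  · simp [hmem]
  · rw [partialSums_map]
    exact hsums_nodup.map_on fun x hx y hy => hsums hx hy

section Ordered

variable [AddCommMonoid M] [PartialOrder M] {l : List M} {s : M}

theorem le_sum_of_mem_partialSums [IsOrderedAddMonoid M] (hl : ∀ x ∈ l, 0 ≤ x)
    (hs : s ∈ partialSums l) : s ≤ l.sum := by
  obtain ⟨t, ht, rfl⟩ := mem_partialSums.1 hs
  exact ht.sublist.sum_le_sum hl

theorem pairwise_lt_partialSums [IsOrderedCancelAddMonoid M] (hl : ∀ x ∈ l, 0 < x) :
    (partialSums l).Pairwise (· < ·) := by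
  induction l with
  | nil => simp
  | cons a l ih =>
    simp only [List.forall_mem_cons] at hl
    rw [partialSums_cons, List.pairwise_cons, List.pairwise_map]
    refine ⟨?_, (ih hl.2).imp (add_lt_add_iff_left a).2⟩
    simp only [List.mem_map]
    rintro _ ⟨t, ht, rfl⟩
    obtain ⟨t', ht', rfl⟩ := mem_partialSums.1 ht
    exact add_pos_of_pos_of_nonneg hl.1 (List.sum_nonneg fun x hx => (hl.2 x (ht'.subset hx)).le)

theorem pos_of_mem_tail_partialSums [IsOrderedCancelAddMonoid M] (hl : ∀ x ∈ l, 0 < x)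
    (hs : s ∈ (partialSums l).tail) : 0 < s := by
  have := pairwise_lt_partialSums hl
  rw [partialSums_eq_zero_cons_tail, List.pairwise_cons] at this
  exact this.1 s hs

end Ordered

end PartialSums

open Finset in
theorem exists_orderings_partialSums_inter_eq_zero (P M : Finset ℤ) (hP : ∀ x ∈ P, 0 < x)
    (hM : ∀ x ∈ M, 0 < x) (hPM : ∑ x ∈ P, x ≠ ∑ x ∈ M, x) :
    ∃ lp lm : List ℤ, lp.Nodup ∧ lp.toFinset = P ∧ lm.Nodup ∧ lm.toFinset = M ∧
      ∀ s ∈ partialSums lp, s ∈ partialSums lm → s = 0 := by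
  induction hc : #P + #M generalizing P M with
  | zero =>
    obtain ⟨rfl, rfl⟩ : P = ∅ ∧ M = ∅ := by simpa [card_eq_zero] using hc
    simp at hPM
  | succ c ih =>
    -- Append to the heavier side some `y` other than the difference of the sums: the new
    -- partial sum is its total, above every partial sum of the other side.
    wlog hlt : ∑ x ∈ P, x < ∑ x ∈ M, x generalizing P M
    · obtain ⟨lm, lp, hlm, hlmM, hlp, hlpP, hinter⟩ :=
        this M P hM hP hPM.symm (by omega) (lt_of_le_of_ne (not_lt.1 hlt) hPM.symm)
      exact ⟨lp, lm, hlp, hlpP, hlm, hlmM, fun s hs hs' => hinter s hs' hs⟩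
    rcases P.eq_empty_or_nonempty with rfl | hPne
    · exact ⟨[], M.toList, List.nodup_nil, rfl, M.nodup_toList, M.toList_toFinset, by simp⟩
    have hPpos : 0 < ∑ x ∈ P, x := sum_pos hP hPne
    obtain ⟨y, hyM, hy⟩ : ∃ y ∈ M, y ≠ ∑ x ∈ M, x - ∑ x ∈ P, x := by
      by_contra! h
      obtain ⟨z, hz⟩ : M.Nonempty := nonempty_of_sum_ne_zero (by omega : ∑ x ∈ M, x ≠ 0)
      have hMz : M = {z} :=
        eq_singleton_iff_unique_mem.2 ⟨hz, fun w hw => (h w hw).trans (h z hz).symm⟩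
      have := h z hz
      simp only [hMz, sum_singleton] at this
      omega
    obtain ⟨lp, lm, hlp, hlpP, hlm, hlmM, hinter⟩ :=
      ih P (M.erase y) hP (fun x hx => hM x (mem_of_mem_erase hx))
        (by rw [sum_erase_eq_sub hyM]; omega)
        (by rw [card_erase_of_mem hyM]; have := card_pos.2 ⟨y, hyM⟩; omega)
    have hlm_sum : lm.sum = ∑ x ∈ M, x - y := by
      rw [← sum_erase_eq_sub hyM, ← hlmM, List.sum_toFinset _ hlm, List.map_id']
    refine ⟨lp, lm ++ [y], hlp, hlpP, ?_, ?_, fun s hs hs' => ?_⟩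
    · exact hlm.append (List.nodup_singleton y) (by simp [← List.mem_toFinset, hlmM])
    · rw [List.toFinset_append, hlmM]; simp [hyM]
    · simp only [partialSums_append, partialSums_cons, partialSums_nil, List.map_cons,
        List.map_nil, List.tail_cons, add_zero, List.mem_append, List.mem_singleton] at hs'
      rcases hs' with hs' | rfl
      · exact hinter s hs hs'
      · have hlp_sum : lp.sum = ∑ x ∈ P, x := by
          rw [← hlpP, List.sum_toFinset _ hlp, List.map_id']
        have := le_sum_of_mem_partialSums
          (fun x hx => (hP x (hlpP ▸ List.mem_toFinset.2 hx)).le) hs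
        omega

theorem partialSums_reverse_append_map_neg (lp lm : List ℤ) :
    partialSums (lp.reverse ++ lm.map negAddMonoidHom) =
      ((partialSums lp).reverse ++ (partialSums lm).tail).map (lp.sum - ·) := by
  rw [partialSums_append, partialSums_reverse, partialSums_map, List.map_append, List.map_tail,
    List.map_map, List.sum_reverse]
  congr 2
  ext x
  simp [sub_eq_add_neg]

open Finset in
theorem exists_isAlspachOrdering_int_of_sum_pos (S : Finset ℤ) (h0 : 0 ∉ S)
    (hS : 0 < ∑ x ∈ S, x) : ∃ l, IsAlspachOrdering S l := by
  set P := S.filter (0 < ·)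
  set N := S.filter (¬ 0 < ·)
  have hN : ∀ x ∈ N, x < 0 := fun x hx => by
    obtain ⟨hxS, hx⟩ := mem_filter.1 hx
    exact lt_of_le_of_ne (not_lt.1 hx) (ne_of_mem_of_not_mem hxS h0)
  have hPN : ∑ x ∈ P, x + ∑ x ∈ N, x = ∑ x ∈ S, x := sum_filter_add_sum_filter_not S _ _
  obtain ⟨lp, lm, hlp, hlpP, hlm, hlmN, hinter⟩ := exists_orderings_partialSums_inter_eq_zero
    P (N.image (-·)) (fun x hx => (mem_filter.1 hx).2) (by simpa using fun x hx => hN x hx)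
    (by rw [sum_image (neg_injective.injOn), sum_neg_distrib]; omega)
  have hlp_pos : ∀ x ∈ lp, 0 < x := fun x hx =>
    (mem_filter.1 (hlpP ▸ List.mem_toFinset.2 hx)).2
  have hlm_pos : ∀ x ∈ lm, 0 < x := fun x hx => by
    obtain ⟨a, ha, rfl⟩ := mem_image.1 (hlmN ▸ List.mem_toFinset.2 hx)
    exact neg_pos.2 (hN a ha)
  refine ⟨lp.reverse ++ lm.map negAddMonoidHom,
    isAlspachOrdering_iff.2 ⟨?_, fun x => ?_, ?_⟩⟩
  · refine (List.nodup_reverse.2 hlp).append (hlm.map neg_injective) fun x hx hx' => ?_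
    obtain ⟨y, hy, rfl⟩ := List.mem_map.1 hx'
    have hpos := hlp_pos _ (List.mem_reverse.1 hx)
    rw [negAddMonoidHom_apply] at hpos
    linarith [hlm_pos y hy]
  · have hxP : x ∈ lp ↔ x ∈ P := by rw [← List.mem_toFinset, hlpP]
    have hxN : -x ∈ lm ↔ -x ∈ N.image (-·) := by rw [← List.mem_toFinset, hlmN]
    simp only [List.mem_append, List.mem_reverse, List.mem_map, negAddMonoidHom_apply,
      neg_eq_iff_eq_neg, exists_eq_right, hxP, hxN]
    simp [P, N, ← and_or_left, lt_or_ge]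
  · rw [partialSums_reverse_append_map_neg]
    refine List.Nodup.map sub_right_injective <|
      (List.nodup_reverse.2 (pairwise_lt_partialSums hlp_pos).nodup).append
        ((pairwise_lt_partialSums hlm_pos).nodup.sublist (List.tail_sublist _)) fun s hs hs' => ?_
    have := pos_of_mem_tail_partialSums hlm_pos hs'
    have := hinter s (List.mem_reverse.1 hs) (List.mem_of_mem_tail hs')
    omega

theorem exists_isAlspachOrdering_int (S : Finset ℤ) (h0 : 0 ∉ S) (hS : ∑ x ∈ S, x ≠ 0) :
    ∃ l, IsAlspachOrdering S l := by
  rcases hS.lt_or_gt with hneg | hpos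
  · have hinj : Function.Injective (negAddMonoidHom : ℤ →+ ℤ) := neg_injective
    obtain ⟨l, hl⟩ := exists_isAlspachOrdering_int_of_sum_pos (S.image negAddMonoidHom)
      (by simpa using h0) (by
        rw [Finset.sum_image hinj.injOn]
        simp only [negAddMonoidHom_apply]
        rw [Finset.sum_neg_distrib]
        omega)
    refine ⟨l.map negAddMonoidHom, ?_⟩
    simpa [Finset.image_image, Function.comp_def] using hl.map _ hinj.injOn hinj.injOn
  · exact exists_isAlspachOrdering_int_of_sum_pos S h0 hpos

theorem Nat.abs_sub_mul_lt_of_mul_div_eq {x y m n : ℕ} (hn : 0 < n)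
    (h : x * m / n = y * m / n) : |(x : ℤ) - y| * m < n := by
  have hx := Nat.div_add_mod (x * m) n
  have hy := Nat.div_add_mod (y * m) n
  have hmod := Int.abs_sub_lt_of_lt_lt (Nat.mod_lt (x * m) hn) (Nat.mod_lt (y * m) hn)
  rw [h] at hx
  generalize x * m % n = r₁ at hx hmod
  generalize y * m % n = r₂ at hy hmod
  have hxy : ((x : ℤ) - y) * m = r₁ - r₂ := by
    zify at hx hy
    linarith
  rwa [← abs_of_nonneg (Nat.cast_nonneg (α := ℤ) m), ← abs_mul, hxy, abs_sub_comm]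

open Finset in
theorem ZMod.exists_nat_mul_eq_intCast_abs_mul_lt {n : ℕ} [NeZero n] (A : Finset (ZMod n))
    {m : ℕ} (hm : 0 < m) : ∃ c : ℕ, 0 < c ∧ c ≤ m ^ #A ∧
      ∃ g : ZMod n → ℤ, ∀ a ∈ A, (g a : ZMod n) = c * a ∧ |g a| * m < n := by
  let F : Fin (m ^ #A + 1) → A → Fin m := fun t a =>
    ⟨((t : ZMod n) * a).val * m / n, (Nat.div_lt_iff_lt_mul (NeZero.pos n)).2
      (by rw [mul_comm m]; exact Nat.mul_lt_mul_of_pos_right (ZMod.val_lt _) hm)⟩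
  obtain ⟨t₁, t₂, hne, heq⟩ := Fintype.exists_ne_map_eq_of_card_lt F (by simp)
  wlog hlt : t₂ < t₁ generalizing t₁ t₂
  · exact this t₂ t₁ hne.symm heq.symm (lt_of_le_of_ne (not_lt.1 hlt) hne)
  refine ⟨t₁ - t₂, by omega, by omega,
    fun a => ((t₁ * a : ZMod n).val : ℤ) - (t₂ * a : ZMod n).val, fun a ha => ⟨?_, ?_⟩⟩
  · push_cast [ZMod.natCast_val, ZMod.cast_id', id, Nat.cast_sub hlt.le]
    ring
  · exact Nat.abs_sub_mul_lt_of_mul_div_eq (NeZero.pos n)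
      (Fin.mk.inj_iff.1 (congrFun heq ⟨a, ha⟩))

theorem ZMod.injOn_intCast (n : ℕ) : Set.InjOn (Int.cast : ℤ → ZMod n) {x | 2 * |x| < n} := by
  intro x hx y hy hxy
  have hdvd : (n : ℤ) ∣ y - x := (ZMod.intCast_eq_intCast_iff_dvd_sub x y n).1 hxy
  have hlt : |y - x| < n := (abs_sub _ _).trans_lt <| by
    linarith [show 2 * |x| < n from hx, show 2 * |y| < n from hy]
  linarith [Int.eq_zero_of_abs_lt_dvd hdvd hlt]

open Finset in
theorem exists_isAlspachOrdering_zmod_of_lift {n : ℕ} (A : Finset (ZMod n)) (hA0 : 0 ∉ A)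
    (hA : ∑ a ∈ A, a ≠ 0) (u : (ZMod n)ˣ) (g : ZMod n → ℤ)
    (hg : ∀ a ∈ A, (g a : ZMod n) = u * a) (hsmall : 2 * ∑ a ∈ A, |g a| < n) :
    ∃ l, IsAlspachOrdering A l := by
  have hg_inj : Set.InjOn g A := fun a ha b hb h => by
    simpa [hg a ha, hg b hb] using congrArg (Int.cast : ℤ → ZMod n) h
  set B := A.image g
  have hB0 : 0 ∉ B := by
    simp only [B, mem_image, not_exists, not_and]
    intro a ha hga
    have : (u : ZMod n) * a = 0 := by rw [← hg a ha, hga, Int.cast_zero]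
    exact hA0 ((Units.mul_right_eq_zero u).1 this ▸ ha)
  have hBsum : ∑ b ∈ B, b ≠ 0 := by
    intro h
    have := congrArg (Int.cast : ℤ → ZMod n) h
    rw [sum_image hg_inj, Int.cast_sum, sum_congr rfl hg, ← mul_sum, Int.cast_zero] at this
    exact hA ((Units.mul_right_eq_zero u).1 this)
  obtain ⟨l, hl⟩ := exists_isAlspachOrdering_int B hB0 hBsum
  let φ : ℤ →+ ZMod n :=
    (AddMonoidHom.mulLeft (↑u⁻¹ : ZMod n)).comp (Int.castAddHom (ZMod n))
  have hφ : Set.InjOn φ {x | 2 * |x| < n} := fun x hx y hy h =>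
    ZMod.injOn_intCast n hx hy (by simpa [φ] using h)
  have hsub : ∀ T ⊆ B, 2 * |∑ x ∈ T, x| < n := fun T hT => by
    have : ∑ x ∈ T, |x| ≤ ∑ b ∈ B, |b| :=
      sum_le_sum_of_subset_of_nonneg hT fun _ _ _ => abs_nonneg _
    rw [sum_image hg_inj] at this
    linarith [abs_sum_le_sum_abs (fun x => x) T]
  have hl_toFinset : l.toFinset = B := by ext; simp [hl.2.1]
  have hAB : B.image φ = A := by
    rw [image_image]
    conv_rhs => rw [← image_id (s := A)]
    exact image_congr fun a ha => by simp [φ, hg a ha]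
  refine ⟨l.map φ, hAB ▸ hl.map φ (hφ.mono fun b hb => ?_) (hφ.mono fun s hs => ?_)⟩
  · simpa using hsub {b} (singleton_subset_iff.2 hb)
  · obtain ⟨T, hT, rfl⟩ := exists_sum_eq_of_mem_partialSums hl.1 hs
    exact hsub T (hl_toFinset ▸ hT)

theorem stmt8_general (k : ℕ) :
    ∃ N : ℕ, 0 < N ∧ ∀ n : ℕ, 0 < n →
      (∀ p : ℕ, p.Prime → p ∣ n → N < p) →
      ∀ A : Finset (ZMod n), (0 : ZMod n) ∉ A → A.card = k → ∑ z ∈ A, z ≠ 0 →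
        ∃ l : List (ZMod n), IsAlspachOrdering A l := by
  refine ⟨(2 * k + 1) ^ k, by positivity, fun n hn hprime A hA0 hAcard hAsum => ?_⟩
  have : NeZero n := ⟨hn.ne'⟩
  obtain ⟨c, hc0, hck, g, hg⟩ :=
    ZMod.exists_nat_mul_eq_intCast_abs_mul_lt A (m := 2 * k + 1) (by omega)
  have hcop : c.Coprime n := Nat.coprime_of_dvd fun p hp hpc hpn =>
    absurd (hprime p hp hpn) (not_lt.2 ((Nat.le_of_dvd hc0 hpc).trans (hAcard ▸ hck)))
  refine exists_isAlspachOrdering_zmod_of_lift A hA0 hAsum (ZMod.unitOfCoprime c hcop) g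
    (fun a ha => (hg a ha).1) ?_
  have hsum : (∑ a ∈ A, |g a|) * (2 * k + 1) ≤ k * ((n : ℤ) - 1) := by
    calc (∑ a ∈ A, |g a|) * (2 * k + 1) = ∑ a ∈ A, |g a| * (2 * k + 1) := Finset.sum_mul ..
      _ ≤ A.card • ((n : ℤ) - 1) := Finset.sum_le_card_nsmul _ _ _ fun a ha => by
        have := (hg a ha).2
        push_cast at this
        omega
      _ = k * ((n : ℤ) - 1) := by rw [hAcard, nsmul_eq_mul]
  nlinarith

theorem stmt8 (k : ℕ) (hk1 : 1 ≤ k) (hk : k ≤ 11) :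
    ∃ N : ℕ, 0 < N ∧ ∀ n : ℕ, 0 < n →
      (∀ p : ℕ, p.Prime → p ∣ n → N < p) →
      ∀ A : Finset (ZMod n), (0 : ZMod n) ∉ A → A.card = k → ∑ z ∈ A, z ≠ 0 →
        ∃ l : List (ZMod n), IsAlspachOrdering A l :=
  stmt8_general k
end

section
/- Let p be a prime and let A ⊆ ℤ/pℤ \ {0} with |A| = k+1, where k ≥ 2 and p > k+1. If some coefficient d_{k+1,j} (j ∈ {1,…,k+1}) of the monomial ∏_{i≠j} x_i^k in f_{k+1}(x₁,…,x_{k+1}) = g_k(x₂,…,x_{k+1})·∏_{i=2}^{k+1}(x_i − x₁) is nonzero modulo p, then there exists an ordering of the elements of A whose partial sums s₁,…,s_{k+1} are pairwise distinct. -/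
/-!
By Alon's Combinatorial Nullstellensatz with every `A_i = A`, the nonzero coefficient of the
homogeneous degree-`k²` polynomial `f_{k+1}` yields a point `a ∈ A^{k+1}` with
`f_{k+1}(a) ≠ 0`. The factors `a_i - a₁` and `a_j - a_i` make the `a_i` distinct, so they
order `A`. For `1 ≤ i < j` the difference `s_j - s_i = a_{i+1} + ⋯ + a_j` is a window sum
avoiding `a₁`: a single entry is nonzero because `0 ∉ A`, and a longer window is a factor of
`g_k(a₂, …, a_{k+1})`.
-/

open MvPolynomial

/-- `g_k = ∏_{1 ≤ i < j ≤ k} (x_j - x_i)(x_i + ⋯ + x_j)`, with variables indexed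
by `Fin k` (so `x₁` corresponds to index `0`, …, `x_k` to index `k-1`). -/
noncomputable def gPoly (R : Type*) [CommRing R] (k : ℕ) : MvPolynomial (Fin k) R :=
  ∏ j : Fin k, ∏ i ∈ Finset.univ.filter (· < j),
    ((X j - X i) * ∑ r ∈ Finset.Icc i j, X r)

open Finset

theorem MvPolynomial.IsHomogeneous.exists_eval_ne_zero {R σ : Type*} [CommRing R] [IsDomain R]
    [Finite σ] {f : MvPolynomial σ R} {n : ℕ} (hf : f.IsHomogeneous n) {t : σ →₀ ℕ}
    (ht : f.coeff t ≠ 0)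
    (S : σ → Finset R) (htS : ∀ i, t i < #(S i)) :
    ∃ s : σ → R, (∀ i, s i ∈ S i) ∧ eval s f ≠ 0 := by
  -- Alon's theorem wants `f.totalDegree = t.degree`, which homogeneity provides.
  refine combinatorial_nullstellensatz_exists_eval_nonzero f t ht ?_ S htS
  rw [hf.totalDegree fun h => ht (by simp [h])]
  exact (not_imp_comm.mp hf.coeff_eq_zero ht).symm

section Polynomials

variable (R : Type*) [CommRing R] (k : ℕ)

/-- `f_{k+1} = g_k(x₂, …, x_{k+1}) ∏_{i=2}^{k+1} (x_i - x₁)`. -/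
noncomputable def fPoly : MvPolynomial (Fin (k + 1)) R :=
  rename Fin.succ (gPoly R k) * ∏ i ∈ univ.erase 0, (X i - X 0)

theorem isHomogeneous_gPoly : (gPoly R k).IsHomogeneous (k * (k - 1)) := by
  have hfactor (i j : Fin k) : ((X j - X i) * ∑ r ∈ Icc i j, X r :
      MvPolynomial (Fin k) R).IsHomogeneous 2 :=
    ((isHomogeneous_X R j).sub (isHomogeneous_X R i)).mul
      (IsHomogeneous.sum _ _ _ fun r _ => isHomogeneous_X R r)
  have hdeg : ∑ j : Fin k, ∑ _i ∈ univ.filter (· < j), 2 = k * (k - 1) := by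
    simp only [sum_const, smul_eq_mul, filter_gt_eq_Iio, Fin.card_Iio]
    rw [Fin.sum_univ_eq_sum_range (fun t => t * 2) k, ← sum_mul, sum_range_id_mul_two]
  rw [gPoly, ← hdeg]
  exact IsHomogeneous.prod _ _ _ fun j _ => IsHomogeneous.prod _ _ _ fun i _ => hfactor i j

theorem isHomogeneous_fPoly : (fPoly R k).IsHomogeneous (k * k) := by
  have hvandermonde := IsHomogeneous.prod (univ.erase (0 : Fin (k + 1))) _ (fun _ => 1)
    fun i _ => (isHomogeneous_X R i).sub (isHomogeneous_X R 0)
  have hdeg : k * (k - 1) + ∑ _i ∈ univ.erase (0 : Fin (k + 1)), 1 = k * k := by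
    simp only [sum_const, card_erase_of_mem (mem_univ _), card_univ, Fintype.card_fin,
      smul_eq_mul, mul_one, Nat.mul_sub_one]
    have := Nat.le_mul_self k
    omega
  rw [fPoly, ← hdeg]
  exact (isHomogeneous_gPoly R k).rename_isHomogeneous.mul hvandermonde

variable {R k}

theorem map_fPoly {S : Type*} [CommRing S] (φ : R →+* S) : map φ (fPoly R k) = fPoly S k := by
  simp [fPoly, gPoly]

theorem eval_fPoly (a : Fin (k + 1) → R) : eval a (fPoly R k) =
    eval (a ∘ Fin.succ) (gPoly R k) * ∏ i ∈ univ.erase 0, (a i - a 0) := by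
  simp [fPoly, eval_rename]

theorem ne_and_sum_Icc_ne_zero_of_eval_gPoly_ne_zero {b : Fin k → R}
    (h : eval b (gPoly R k) ≠ 0) {i j : Fin k} (hij : i < j) :
    b i ≠ b j ∧ ∑ r ∈ Icc i j, b r ≠ 0 := by
  have hfactor : (b j - b i) * ∑ r ∈ Icc i j, b r ≠ 0 := fun h0 => h <| by
    simp only [gPoly, map_prod, map_mul, map_sub, map_sum, eval_X]
    exact prod_eq_zero (mem_univ j) (prod_eq_zero (by simpa using hij) h0)
  exact ⟨fun hb => hfactor (by simp [hb]), right_ne_zero_of_mul hfactor⟩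

theorem injective_of_eval_fPoly_ne_zero {a : Fin (k + 1) → R} (h : eval a (fPoly R k) ≠ 0) :
    Function.Injective a := by
  rw [eval_fPoly] at h
  have hlt {i j : Fin (k + 1)} (hij : i < j) : a i ≠ a j := by
    cases i using Fin.cases with
    | zero =>
      have hj : j ∈ univ.erase 0 := mem_erase.mpr ⟨hij.ne', mem_univ j⟩
      exact fun ha => right_ne_zero_of_mul h (prod_eq_zero hj (by simp [ha]))
    | succ i =>
      cases j using Fin.cases with
      | zero => exact absurd hij (Fin.not_lt_zero _)
      | succ j => exact (ne_and_sum_Icc_ne_zero_of_eval_gPoly_ne_zero (left_ne_zero_of_mul h)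
          (Fin.succ_lt_succ_iff.mp hij)).1
  intro i j hij
  by_contra hne
  rcases lt_or_gt_of_ne hne with hlt' | hlt'
  exacts [hlt hlt' hij, hlt hlt' hij.symm]

/-- Windows of length at least two are factors of `g_k(a 1, …, a k)`. -/
theorem sum_Icc_ne_zero_of_eval_fPoly_ne_zero {a : Fin (k + 1) → R} (ha : ∀ i, a i ≠ 0)
    (h : eval a (fPoly R k) ≠ 0) {u v : Fin (k + 1)} (hu : 0 < u) (huv : u ≤ v) :
    ∑ r ∈ Icc u v, a r ≠ 0 := by
  rcases huv.eq_or_lt with rfl | huv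
  · simpa using ha u
  obtain ⟨i, rfl⟩ := Fin.exists_succ_eq.mpr hu.ne'
  obtain ⟨j, rfl⟩ := Fin.exists_succ_eq.mpr (hu.trans huv).ne'
  rw [eval_fPoly] at h
  rw [← Fin.map_succEmb_Icc, sum_map]
  exact (ne_and_sum_Icc_ne_zero_of_eval_gPoly_ne_zero (left_ne_zero_of_mul h)
    (Fin.succ_lt_succ_iff.mp huv)).2

end Polynomials

section PartialSums

variable {M : Type*} [AddCommGroup M] {n : ℕ}

theorem sum_take_ofFn_sub_sum_take_ofFn (a : Fin n → M) {i j : ℕ} (hij : i < j) (hj : j ≤ n) :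
    ((List.ofFn a).take j).sum - ((List.ofFn a).take i).sum =
      ∑ r ∈ Icc (⟨i, by omega⟩ : Fin n) ⟨j - 1, by omega⟩, a r := by
  rw [List.sum_take_ofFn, List.sum_take_ofFn, sub_eq_iff_eq_add, ← sum_union]
  · congr 1
    ext r
    simp only [mem_filter, mem_univ, true_and, mem_union, mem_Icc, Fin.le_def]
    omega
  · exact disjoint_left.mpr fun r hr hr' => by simp [Fin.le_def] at hr hr'; omega

theorem sum_take_ofFn_ne_sum_take_ofFn (a : Fin (n + 1) → M)
    (ha : ∀ u v : Fin (n + 1), 0 < u → u ≤ v → ∑ r ∈ Icc u v, a r ≠ 0)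
    {i j : ℕ} (hi : 1 ≤ i) (hij : i < j) (hj : j ≤ n + 1) :
    ((List.ofFn a).take i).sum ≠ ((List.ofFn a).take j).sum := by
  intro heq
  refine ha ⟨i, by omega⟩ ⟨j - 1, by omega⟩ (by simp [Fin.lt_def]; omega)
    (by simp [Fin.le_def]; omega) ?_
  rw [← sum_take_ofFn_sub_sum_take_ofFn a hij hj, heq, sub_self]

end PartialSums

theorem mem_ofFn_iff_mem_of_injective {α : Type*} [DecidableEq α] {n : ℕ} {a : Fin n → α}
    (hinj : Function.Injective a) {A : Finset α} (haA : ∀ i, a i ∈ A) (hA : #A = n) (x : α) :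
    x ∈ List.ofFn a ↔ x ∈ A := by
  have himage : univ.image a = A :=
    eq_of_subset_of_card_le (image_subset_iff.mpr fun i _ => haA i)
      (by rw [card_image_of_injective _ hinj, hA, card_univ, Fintype.card_fin])
  simp [← himage]

theorem stmt17_general (p k : ℕ) (hp : p.Prime)
    (A : Finset (ZMod p)) (hA0 : (0 : ZMod p) ∉ A) (hcard : A.card = k + 1)
    (j : Fin (k + 1))
    (hc : ¬ ((p : ℤ) ∣
      (rename Fin.succ (gPoly ℤ k) *
          ∏ i ∈ Finset.univ.erase (0 : Fin (k + 1)), (X i - X 0)).coeff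
        (∑ r ∈ Finset.univ.erase j, Finsupp.single r k))) :
    ∃ l : List (ZMod p), l.Nodup ∧ (∀ x, x ∈ l ↔ x ∈ A) ∧
      ∀ i j' : ℕ, 1 ≤ i → i < j' → j' ≤ l.length →
        (l.take i).sum ≠ (l.take j').sum := by
  have : Fact p.Prime := ⟨hp⟩
  set m : Fin (k + 1) →₀ ℕ := ∑ r ∈ univ.erase j, Finsupp.single r k
  have hcoeff : (fPoly (ZMod p) k).coeff m ≠ 0 := by
    rwa [← map_fPoly (Int.castRingHom (ZMod p)), coeff_map, eq_intCast, Ne,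
      ZMod.intCast_zmod_eq_zero_iff_dvd]
  have hm (i : Fin (k + 1)) : m i < #A := by
    simp only [m, Finsupp.finsetSum_apply, Finsupp.single_apply, sum_ite_eq', hcard]
    split_ifs <;> omega
  obtain ⟨a, haA, ha⟩ := (isHomogeneous_fPoly (ZMod p) k).exists_eval_ne_zero hcoeff _ hm
  have hinj := injective_of_eval_fPoly_ne_zero ha
  refine ⟨List.ofFn a, List.nodup_ofFn.mpr hinj, mem_ofFn_iff_mem_of_injective hinj haA hcard,
    fun i j' hi hij hj => ?_⟩
  rw [List.length_ofFn] at hj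
  exact sum_take_ofFn_ne_sum_take_ofFn a
    (fun _ _ => sum_Icc_ne_zero_of_eval_fPoly_ne_zero (fun i h => hA0 (h ▸ haA i)) ha) hi hij hj

theorem stmt17 (p k : ℕ) (hp : p.Prime) (hk : 2 ≤ k) (hpk : k + 1 < p)
    (A : Finset (ZMod p)) (hA0 : (0 : ZMod p) ∉ A) (hcard : A.card = k + 1)
    (j : Fin (k + 1))
    (hc : ¬ ((p : ℤ) ∣
      (rename Fin.succ (gPoly ℤ k) *
          ∏ i ∈ Finset.univ.erase (0 : Fin (k + 1)), (X i - X 0)).coeff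
        (∑ r ∈ Finset.univ.erase j, Finsupp.single r k))) :
    ∃ l : List (ZMod p), l.Nodup ∧ (∀ x, x ∈ l ↔ x ∈ A) ∧
      ∀ i j' : ℕ, 1 ≤ i → i < j' → j' ≤ l.length →
        (l.take i).sum ≠ (l.take j').sum :=
  stmt17_general p k hp A hA0 hcard j hc
end
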